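/- Let P and Q = P + E be irreducible row-stochastic n×n matrices with stationary distributions π(P) and π(Q) (row vectors with πP = π, nonnegative entries summing to 1). If the ergodicity coefficient τ₁(P) < 1, then the total variation distance satisfies D(π(P), π(Q)) = (1/2)‖π(P) − π(Q)‖₁ ≤ ‖E‖_∞ / (2(1 − τ₁(P))). -/

import Mathlib

/-!
Write `v = π(P) - π(Q)`. Stationarity of both distributions gives `v P = v + π(Q) E`, so
`‖v‖₁ ≤ ‖v P‖₁ + ‖π(Q) E‖₁`. Since `v` sums to zero, `‖v P‖₁ ≤ τ₁(P) ‖v‖₁`, and since `π(Q)` is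
a probability vector, `‖π(Q) E‖₁ ≤ ‖E‖_∞`. Hence `(1 - τ₁(P)) ‖v‖₁ ≤ ‖E‖_∞`.
-/

open Matrix Finset

variable {ι κ : Type*} [Fintype ι] [Fintype κ]

noncomputable def ergodicityCoeff (A : Matrix ι κ ℝ) : ℝ :=
  sSup {x : ℝ | ∃ v : ι → ℝ, ∑ i, |v i| = 1 ∧ ∑ i, v i = 0 ∧ x = ∑ j, |(v ᵥ* A) j|}

theorem sum_abs_vecMul_le (v : ι → ℝ) (A : Matrix ι κ ℝ) :
    ∑ j, |(v ᵥ* A) j| ≤ (∑ i, |v i|) * ⨆ i, ∑ j, |A i j| :=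
  calc ∑ j, |(v ᵥ* A) j| ≤ ∑ j, ∑ i, |v i| * |A i j| :=
        sum_le_sum fun j _ => (abs_sum_le_sum_abs _ _).trans_eq (by simp only [abs_mul])
    _ = ∑ i, |v i| * ∑ j, |A i j| := by rw [sum_comm]; simp only [mul_sum]
    _ ≤ ∑ i, |v i| * ⨆ i, ∑ j, |A i j| := sum_le_sum fun i _ =>
        mul_le_mul_of_nonneg_left
          (le_ciSup (f := fun i => ∑ j, |A i j|) (Set.finite_range _).bddAbove i) (abs_nonneg _)
    _ = (∑ i, |v i|) * ⨆ i, ∑ j, |A i j| := (sum_mul _ _ _).symm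

theorem sum_abs_vecMul_le_ergodicityCoeff_mul (A : Matrix ι κ ℝ) {v : ι → ℝ}
    (hv : ∑ i, v i = 0) : ∑ j, |(v ᵥ* A) j| ≤ ergodicityCoeff A * ∑ i, |v i| := by
  rcases (sum_nonneg fun i _ => abs_nonneg (v i)).eq_or_lt with hS | hS
  · have hv0 : v = 0 := funext fun i =>
      abs_eq_zero.1 ((sum_eq_zero_iff_of_nonneg fun i _ => abs_nonneg (v i)).1 hS.symm i
        (mem_univ i))
    simp [hv0]
  have hbdd : BddAbove {x : ℝ | ∃ w : ι → ℝ, ∑ i, |w i| = 1 ∧ ∑ i, w i = 0 ∧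
      x = ∑ j, |(w ᵥ* A) j|} := by
    refine ⟨⨆ i, ∑ j, |A i j|, ?_⟩
    rintro _ ⟨w, hw1, -, rfl⟩
    simpa [hw1] using sum_abs_vecMul_le w A
  set S := ∑ i, |v i| with hSdef
  have hscale : ∑ j, |((S⁻¹ • v) ᵥ* A) j| = S⁻¹ * ∑ j, |(v ᵥ* A) j| := by
    simp [smul_vecMul, abs_mul, abs_of_pos (inv_pos.2 hS), mul_sum]
  have hle : S⁻¹ * ∑ j, |(v ᵥ* A) j| ≤ ergodicityCoeff A := by
    refine hscale ▸ le_csSup hbdd ⟨S⁻¹ • v, ?_, ?_, rfl⟩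
    · simp [abs_mul, abs_of_pos hS, ← mul_sum, ← hSdef, hS.ne']
    · simp [← mul_sum, hv]
  rwa [inv_mul_le_iff₀ hS, mul_comm] at hle

theorem sub_vecMul_eq_add_vecMul {P E : Matrix ι ι ℝ} {μ ν : ι → ℝ} (hμ : μ ᵥ* P = μ)
    (hν : ν ᵥ* (P + E) = ν) : (μ - ν) ᵥ* P = μ - ν + ν ᵥ* E := by
  rw [vecMul_add] at hν
  rw [sub_vecMul, hμ]
  linear_combination -hν

theorem sum_abs_sub_mul_one_sub_ergodicityCoeff_le {P E : Matrix ι ι ℝ} {μ ν : ι → ℝ}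
    (hμ : μ ᵥ* P = μ) (hν : ν ᵥ* (P + E) = ν) (hμsum : ∑ i, μ i = 1) (hνsum : ∑ i, ν i = 1)
    (hν0 : ∀ i, 0 ≤ ν i) :
    (∑ i, |μ i - ν i|) * (1 - ergodicityCoeff P) ≤ ⨆ i, ∑ j, |E i j| := by
  have hsum : ∑ i, (μ - ν) i = 0 := by simp [sum_sub_distrib, hμsum, hνsum]
  have hνE : ∑ j, |(ν ᵥ* E) j| ≤ ⨆ i, ∑ j, |E i j| := by
    simpa [abs_of_nonneg (hν0 _), hνsum] using sum_abs_vecMul_le ν E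
  have hsplit : μ - ν = (μ - ν) ᵥ* P - ν ᵥ* E := by
    rw [sub_vecMul_eq_add_vecMul hμ hν]; abel
  have hS : ∑ i, |(μ - ν) i| ≤ ergodicityCoeff P * ∑ i, |(μ - ν) i| + ⨆ i, ∑ j, |E i j| :=
    calc ∑ i, |(μ - ν) i| ≤ ∑ j, |((μ - ν) ᵥ* P) j| + ∑ j, |(ν ᵥ* E) j| := by
          conv_lhs => rw [hsplit]
          exact (sum_le_sum fun j _ => abs_sub _ _).trans_eq sum_add_distrib
      _ ≤ _ := add_le_add (sum_abs_vecMul_le_ergodicityCoeff_mul P hsum) hνE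
  simp only [Pi.sub_apply] at hS
  linarith

theorem stationary_distribution_perturbation_general {n : ℕ}
    (P Q E : Matrix (Fin n) (Fin n) ℝ) (hE : Q = P + E)
    (πP πQ : Fin n → ℝ)
    (hπPsum : ∑ x, πP x = 1)
    (hπPstat : ∀ j, ∑ i, πP i * P i j = πP j)
    (hπQnonneg : ∀ x, 0 ≤ πQ x) (hπQsum : ∑ x, πQ x = 1)
    (hπQstat : ∀ j, ∑ i, πQ i * Q i j = πQ j)
    (τ : ℝ)
    (hτ : τ = sSup {x : ℝ | ∃ v : Fin n → ℝ, (∑ i, |v i|) = 1 ∧ (∑ i, v i) = 0 ∧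
        x = ∑ j, |∑ i, v i * P i j|})
    (hτlt : τ < 1) :
    (1 / 2) * ∑ x, |πP x - πQ x| ≤ (⨆ i, ∑ j, |E i j|) / (2 * (1 - τ)) := by
  have hτP : τ = ergodicityCoeff P := hτ
  have hQstat : πQ ᵥ* (P + E) = πQ := hE ▸ funext hπQstat
  have hbound := sum_abs_sub_mul_one_sub_ergodicityCoeff_le (funext hπPstat) hQstat hπPsum
    hπQsum hπQnonneg
  rw [← hτP] at hbound
  rw [le_div_iff₀ (by linarith)]
  linarith

/-- Perturbation bound for stationary distributions: if `P` and `Q = P + E` are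
irreducible row-stochastic matrices with stationary distributions `πP`, `πQ`, and
the ergodicity coefficient `τ₁(P) < 1`, then the total variation distance
satisfies `(1/2)‖πP - πQ‖₁ ≤ ‖E‖_∞ / (2 (1 - τ₁(P)))`. -/
theorem stationary_distribution_perturbation {n : ℕ}
    (P Q E : Matrix (Fin n) (Fin n) ℝ) (hE : Q = P + E)
    (hPnonneg : ∀ i j, 0 ≤ P i j) (hProw : ∀ i, ∑ j, P i j = 1)
    (hQnonneg : ∀ i j, 0 ≤ Q i j) (hQrow : ∀ i, ∑ j, Q i j = 1)
    (hPirred : ∀ i j, ∃ k : ℕ, 0 < (P ^ k) i j)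
    (hQirred : ∀ i j, ∃ k : ℕ, 0 < (Q ^ k) i j)
    (πP πQ : Fin n → ℝ)
    (hπPnonneg : ∀ x, 0 ≤ πP x) (hπPsum : ∑ x, πP x = 1)
    (hπPstat : ∀ j, ∑ i, πP i * P i j = πP j)
    (hπQnonneg : ∀ x, 0 ≤ πQ x) (hπQsum : ∑ x, πQ x = 1)
    (hπQstat : ∀ j, ∑ i, πQ i * Q i j = πQ j)
    (τ : ℝ)
    (hτ : τ = sSup {x : ℝ | ∃ v : Fin n → ℝ, (∑ i, |v i|) = 1 ∧ (∑ i, v i) = 0 ∧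
        x = ∑ j, |∑ i, v i * P i j|})
    (hτlt : τ < 1) :
    (1 / 2) * ∑ x, |πP x - πQ x| ≤ (⨆ i, ∑ j, |E i j|) / (2 * (1 - τ)) :=
  stationary_distribution_perturbation_general P Q E hE πP πQ hπPsum hπPstat hπQnonneg hπQsum
    hπQstat τ hτ hτlt
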